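/- For every δ > 0 there exists a constant C_δ (depending only on c and δ) such that for all X in H, t in [0,T], and all controls v(.) in L²(t,T;H), J_{X,t}(v(.)) ≥ ((λ − (c+δ)T(1+T))/2) ∫_t^T ||v(s)||² ds − C_δ (1+||X||²)(1+T). In particular, if λ > cT(1+T), then J_{X,t}(v(.)) → +∞ as ∫_t^T ||v(s)||² ds → +∞. -/

import Mathlib

open MeasureTheory Set
open scoped RealInnerProductSpace

variable {H : Type*} [NormedAddCommGroup H] [InnerProductSpace ℝ H] [CompleteSpace H]

/-- The state `X(s) = X + ∫_t^s v(σ) dσ` associated to the control `v`. -/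
noncomputable def state (X : H) (t : ℝ) (v : ℝ → H) (s : ℝ) : H :=
  X + ∫ σ in t..s, v σ

/-- A control belongs to `L²(t,T;H)`. -/
def Admissible (t T : ℝ) (v : ℝ → H) : Prop :=
  IntervalIntegrable v volume t T ∧ IntervalIntegrable (fun s => ‖v s‖ ^ 2) volume t T

/-- The cost functional `J_{X,t}(v)`. -/
noncomputable def cost (F FT : H → ℝ) (lam : ℝ) (X : H) (t T : ℝ) (v : ℝ → H) : ℝ :=
  lam / 2 * (∫ s in t..T, ‖v s‖ ^ 2) + (∫ s in t..T, F (state X t v s)) + FT (state X t v T)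

/-- The value function `V(X,t) = inf_v J_{X,t}(v)`. -/
noncomputable def valueFn (F FT : H → ℝ) (lam T : ℝ) (X : H) (t : ℝ) : ℝ :=
  sInf ((fun v => cost F FT lam X t T v) '' {v : ℝ → H | Admissible t T v})

/-- The adjoint state `Z(s) = D F_T(Y(T)) + ∫_s^T D F(Y(σ)) dσ` associated to a path `Y`. -/
noncomputable def adjZ (DF DFT : H → H) (T : ℝ) (Y : ℝ → H) (s : ℝ) : H :=
  DFT (Y T) + ∫ σ in s..T, DF (Y σ)

/-- `Y` solves the two-point boundary value problem
`dY/ds = -(1/λ) Z(s)`, `-dZ/ds = D F(Y(s))`, `Y(t) = X`, `Z(T) = D F_T(Y(T))`,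
where `Z = adjZ DF DFT T Y` encodes the two last conditions. -/
def IsOptimalPath (DF DFT : H → H) (lam T : ℝ) (X : H) (t : ℝ) (Y : ℝ → H) : Prop :=
  ContinuousOn Y (Icc t T) ∧ Y t = X ∧
    ∀ s ∈ Icc t T, HasDerivWithinAt Y (-(1 / lam) • adjZ DF DFT T Y s) (Icc t T) s

/-! A function `G` with `c`-Lipschitz gradient lies above its tangent paraboloid at `0`, so with
`‖DG 0‖ ≤ c` and Young's inequality, `G y ≥ G 0 - c/(2ε) - c(1+ε)/2 ‖y‖²` for every `ε > 0`.
By Cauchy–Schwarz the state obeys `‖X(s)‖² ≤ (1+1/ε)‖X‖² + (1+ε)(T-t)∫‖v‖²`. Inserting this in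
the running and the terminal cost loses at most `c(1+ε)²(T-t)(T-t+1)/2 · ∫‖v‖²`, and `ε` is
chosen with `c(1+ε)² < c + δ`. For the second claim take `δ` so small that the coefficient of
`∫‖v‖²` in the first one stays positive. -/

open Filter Topology

section
variable {E : Type*} [NormedAddCommGroup E] [InnerProductSpace ℝ E] [CompleteSpace E]

lemma add_inner_sub_le_of_lipschitz_gradient {G : E → ℝ} {DG : E → E} {c : ℝ}
    (hG : ∀ x, HasGradientAt G (DG x) x) (hL : ∀ x y, ‖DG x - DG y‖ ≤ c * ‖x - y‖) (x y : E) :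
    G x + ⟪DG x, y - x⟫ - c / 2 * ‖y - x‖ ^ 2 ≤ G y := by
  set d := y - x
  -- `φ` is nondecreasing on `[0, 1]` because the Lipschitz bound dominates the change of slope.
  set φ : ℝ → ℝ := fun τ => G (x + τ • d) - τ * ⟪DG x, d⟫ + c / 2 * ‖d‖ ^ 2 * τ ^ 2
  have hφ : ∀ τ, HasDerivAt φ (⟪DG (x + τ • d), d⟫ - ⟪DG x, d⟫ + c * ‖d‖ ^ 2 * τ) τ := by
    intro τ
    have hline : HasDerivAt (fun τ : ℝ => x + τ • d) d τ := by
      simpa using ((hasDerivAt_id τ).smul_const d).const_add x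
    have hGline := (hG (x + τ • d)).hasFDerivAt.comp_hasDerivAt τ hline
    rw [InnerProductSpace.toDual_apply_apply] at hGline
    refine ((hGline.sub ((hasDerivAt_id τ).mul_const ⟪DG x, d⟫)).add
      (((hasDerivAt_id τ).pow 2).const_mul (c / 2 * ‖d‖ ^ 2))).congr_deriv ?_
    simp only [id, Nat.cast_ofNat]
    ring
  have hφ' : ∀ τ ∈ interior (Icc (0 : ℝ) 1),
      0 ≤ ⟪DG (x + τ • d), d⟫ - ⟪DG x, d⟫ + c * ‖d‖ ^ 2 * τ := by
    intro τ hτ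
    rw [interior_Icc] at hτ
    have hslope : ‖DG (x + τ • d) - DG x‖ ≤ c * (τ * ‖d‖) := by
      simpa [norm_smul, abs_of_pos hτ.1] using hL (x + τ • d) x
    have hinner := real_inner_le_norm (DG x - DG (x + τ • d)) d
    rw [← norm_neg, neg_sub, inner_sub_left] at hinner
    nlinarith [norm_nonneg d]
  have hmono := monotoneOn_of_hasDerivWithinAt_nonneg (convex_Icc 0 1)
    (fun τ _ => (hφ τ).continuousAt.continuousWithinAt) (fun τ _ => (hφ τ).hasDerivWithinAt) hφ'
  have hφ01 := hmono (left_mem_Icc.2 zero_le_one) (right_mem_Icc.2 zero_le_one) zero_le_one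
  simp only [φ, zero_smul, add_zero, one_smul, zero_mul, sub_zero, one_mul,
    ne_eq, OfNat.ofNat_ne_zero, not_false_eq_true, zero_pow, mul_zero, one_pow, mul_one] at hφ01
  rw [show x + d = y from add_sub_cancel x y] at hφ01
  linarith

lemma sub_sq_le_of_lipschitz_gradient {G : E → ℝ} {DG : E → E} {c ε : ℝ}
    (hG : ∀ x, HasGradientAt G (DG x) x) (hL : ∀ x y, ‖DG x - DG y‖ ≤ c * ‖x - y‖)
    (h0 : ‖DG 0‖ ≤ c) (hε : 0 < ε) {y : E} {r : ℝ} (hy : ‖y‖ ^ 2 ≤ r) :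
    G 0 - c / (2 * ε) - c * (1 + ε) / 2 * r ≤ G y := by
  have hc : 0 ≤ c := (norm_nonneg _).trans h0
  have hdescent := add_inner_sub_le_of_lipschitz_gradient hG hL 0 y
  rw [sub_zero] at hdescent
  have hinner : -(c * ‖y‖) ≤ ⟪DG 0, y⟫ := by
    nlinarith [neg_abs_le ⟪DG 0, y⟫, abs_real_inner_le_norm (DG 0) y, norm_nonneg y]
  have hyoung : c * ‖y‖ ≤ c / (2 * ε) + c * ε / 2 * ‖y‖ ^ 2 := by
    have hsq : 0 ≤ c * (ε * ‖y‖ - 1) ^ 2 / (2 * ε) := by positivity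
    have hexpand :
        c * (ε * ‖y‖ - 1) ^ 2 / (2 * ε) = c / (2 * ε) + c * ε / 2 * ‖y‖ ^ 2 - c * ‖y‖ := by
      field_simp
      ring
    linarith
  nlinarith [mul_le_mul_of_nonneg_left hy (by positivity : 0 ≤ c * (1 + ε) / 2)]

end

lemma sq_intervalIntegral_le {f : ℝ → ℝ} {a b : ℝ} (hab : a ≤ b)
    (hf : IntervalIntegrable f volume a b)
    (hf2 : IntervalIntegrable (fun s => f s ^ 2) volume a b) :
    (∫ s in a..b, f s) ^ 2 ≤ (b - a) * ∫ s in a..b, f s ^ 2 := by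
  rcases hab.eq_or_lt with rfl | hlt
  · simp
  set I := ∫ s in a..b, f s
  set m := I / (b - a)
  have hamgm : 2 * m * I ≤ (∫ s in a..b, f s ^ 2) + m ^ 2 * (b - a) := by
    have hmono := intervalIntegral.integral_mono_on hab (hf.const_mul (2 * m))
      (hf2.add (intervalIntegrable_const (c := m ^ 2)))
      fun s _ => by nlinarith [sq_nonneg (f s - m)]
    rwa [intervalIntegral.integral_const_mul, intervalIntegral.integral_add hf2
      intervalIntegrable_const, intervalIntegral.integral_const, smul_eq_mul, mul_comm _ (m ^ 2)]
        at hmono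
  have hpos : 0 < b - a := sub_pos.2 hlt
  have hm : m * (b - a) = I := div_mul_cancel₀ _ hpos.ne'
  nlinarith

section
variable {E : Type*} [NormedAddCommGroup E] [InnerProductSpace ℝ E]

lemma continuousOn_state {X : E} {t T : ℝ} {v : ℝ → E} (htT : t ≤ T)
    (hv : IntervalIntegrable v volume t T) : ContinuousOn (state X t v) (Icc t T) := by
  have h := intervalIntegral.continuousOn_primitive_interval' hv left_mem_uIcc
  rw [uIcc_of_le htT] at h
  exact continuousOn_const.add h

lemma sq_norm_state_le {X : E} {t T s ε : ℝ} {v : ℝ → E} (hε : 0 < ε) (hv : Admissible t T v)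
    (hs : s ∈ Icc t T) :
    ‖state X t v s‖ ^ 2 ≤ (1 + 1 / ε) * ‖X‖ ^ 2 + (1 + ε) * ((T - t) * ∫ σ in t..T, ‖v σ‖ ^ 2) := by
  obtain ⟨hts, hsT⟩ := hs
  have hsub : uIcc t s ⊆ uIcc t T := by
    rw [uIcc_of_le hts, uIcc_of_le (hts.trans hsT)]
    exact Icc_subset_Icc le_rfl hsT
  set B := ∫ σ in t..s, ‖v σ‖
  have hB : 0 ≤ B := intervalIntegral.integral_nonneg hts fun _ _ => norm_nonneg _
  have hnorm : ‖state X t v s‖ ≤ ‖X‖ + B :=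
    (norm_add_le _ _).trans (by gcongr; exact intervalIntegral.norm_integral_le_integral_norm hts)
  have hB2 : B ^ 2 ≤ (T - t) * ∫ σ in t..T, ‖v σ‖ ^ 2 := calc
    B ^ 2 ≤ (s - t) * ∫ σ in t..s, ‖v σ‖ ^ 2 :=
      sq_intervalIntegral_le hts (hv.1.mono_set hsub).norm (hv.2.mono_set hsub)
    _ ≤ (T - t) * ∫ σ in t..T, ‖v σ‖ ^ 2 :=
      mul_le_mul (by linarith) (intervalIntegral.integral_mono_interval le_rfl hts hsT
          (ae_of_all _ fun _ => sq_nonneg _) hv.2)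
        (intervalIntegral.integral_nonneg hts fun _ _ => sq_nonneg _) (by linarith)
  have hyoung : (‖X‖ + B) ^ 2 ≤ (1 + 1 / ε) * ‖X‖ ^ 2 + (1 + ε) * B ^ 2 := by
    have hexpand :
        (1 + 1 / ε) * ‖X‖ ^ 2 + (1 + ε) * B ^ 2 - (‖X‖ + B) ^ 2 = (‖X‖ - ε * B) ^ 2 / ε := by
      field_simp
      ring
    nlinarith [div_nonneg (sq_nonneg (‖X‖ - ε * B)) hε.le]
  calc ‖state X t v s‖ ^ 2 ≤ (‖X‖ + B) ^ 2 := pow_le_pow_left₀ (norm_nonneg _) hnorm 2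
    _ ≤ _ := hyoung
    _ ≤ _ := by gcongr

end

lemma cost_ge_of_sq_norm_state_le {F FT : H → ℝ} {DF DFT : H → H} {c lam ε r : ℝ} {X : H}
    {t T : ℝ} {v : ℝ → H}
    (hF : ∀ X, HasGradientAt F (DF X) X) (hFT : ∀ X, HasGradientAt FT (DFT X) X)
    (hDF : ∀ X₁ X₂ : H, ‖DF X₁ - DF X₂‖ ≤ c * ‖X₁ - X₂‖)
    (hDFT : ∀ X₁ X₂ : H, ‖DFT X₁ - DFT X₂‖ ≤ c * ‖X₁ - X₂‖)
    (hDF0 : ‖DF 0‖ ≤ c) (hDFT0 : ‖DFT 0‖ ≤ c) (hε : 0 < ε) (htT : t ≤ T)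
    (hv : IntervalIntegrable v volume t T) (hr : ∀ s ∈ Icc t T, ‖state X t v s‖ ^ 2 ≤ r) :
    lam / 2 * (∫ s in t..T, ‖v s‖ ^ 2) + (T - t) * (F 0 - c / (2 * ε) - c * (1 + ε) / 2 * r) +
      (FT 0 - c / (2 * ε) - c * (1 + ε) / 2 * r) ≤ cost F FT lam X t T v := by
  have hFstate : IntervalIntegrable (fun s => F (state X t v s)) volume t T :=
    (continuous_iff_continuousAt.2 fun x => (hF x).continuousAt).comp_continuousOn
      (continuousOn_state htT hv) |>.intervalIntegrable_of_Icc htT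
  have hintegral : (T - t) * (F 0 - c / (2 * ε) - c * (1 + ε) / 2 * r) ≤
      ∫ s in t..T, F (state X t v s) := by
    have hmono := intervalIntegral.integral_mono_on htT intervalIntegrable_const hFstate
      fun s hs => sub_sq_le_of_lipschitz_gradient hF hDF hDF0 hε (hr s hs)
    rwa [intervalIntegral.integral_const, smul_eq_mul] at hmono
  have hterminal := sub_sq_le_of_lipschitz_gradient hFT hDFT hDFT0 hε (hr T ⟨htT, le_rfl⟩)
  unfold cost
  linarith

lemma exists_pos_mul_one_add_sq_lt (c : ℝ) {δ : ℝ} (hδ : 0 < δ) :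
    ∃ ε > 0, c * (1 + ε) ^ 2 < c + δ := by
  have hlim : Tendsto (fun ε : ℝ => c * (1 + ε) ^ 2) (𝓝[>] 0) (𝓝 c) := by
    have hcont : Continuous (fun ε : ℝ => c * (1 + ε) ^ 2) := by fun_prop
    simpa using (hcont.tendsto 0).mono_left nhdsWithin_le_nhds
  obtain ⟨ε, hlt, hpos⟩ :=
    ((hlim.eventually (gt_mem_nhds (lt_add_of_pos_right c hδ))).and self_mem_nhdsWithin).exists
  exact ⟨ε, hpos, hlt⟩

theorem cost_coercive {F FT : H → ℝ} {DF DFT : H → H} {c T lam : ℝ}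
    (hF : ∀ X, HasGradientAt F (DF X) X) (hFT : ∀ X, HasGradientAt FT (DFT X) X)
    (hDF : ∀ X₁ X₂ : H, ‖DF X₁ - DF X₂‖ ≤ c * ‖X₁ - X₂‖)
    (hDFT : ∀ X₁ X₂ : H, ‖DFT X₁ - DFT X₂‖ ≤ c * ‖X₁ - X₂‖)
    (hDF0 : ‖DF 0‖ ≤ c) (hDFT0 : ‖DFT 0‖ ≤ c) {δ : ℝ} (hδ : 0 < δ) :
    ∃ C : ℝ, ∀ X : H, ∀ t ∈ Icc 0 T, ∀ v : ℝ → H, Admissible t T v →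
      (lam - (c + δ) * T * (1 + T)) / 2 * (∫ s in t..T, ‖v s‖ ^ 2) -
          C * (1 + ‖X‖ ^ 2) * (1 + T) ≤ cost F FT lam X t T v := by
  have hc : 0 ≤ c := (norm_nonneg _).trans hDF0
  obtain ⟨ε, hε, hεδ⟩ := exists_pos_mul_one_add_sq_lt c hδ
  set e := c / (2 * ε)
  set k := c * (1 + ε) / 2 * (1 + 1 / ε)
  refine ⟨|F 0| + |FT 0| + e + k, ?_⟩
  rintro X t ⟨ht0, htT⟩ v hv
  set A := ∫ s in t..T, ‖v s‖ ^ 2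
  set N := ‖X‖ ^ 2
  have hA : 0 ≤ A := intervalIntegral.integral_nonneg htT fun _ _ => sq_nonneg _
  have hN : 0 ≤ N := sq_nonneg _
  have he : 0 ≤ e := by positivity
  have hk : 0 ≤ k := by positivity
  have hcost := cost_ge_of_sq_norm_state_le (lam := lam) (X := X) hF hFT hDF hDFT hDF0 hDFT0 hε
    htT hv.1 fun s hs => sq_norm_state_le hε hv hs
  have hlength : (T - t + 1) * (T - t) ≤ (1 + T) * T := by nlinarith
  have hquadratic :
      c * (1 + ε) ^ 2 * ((T - t + 1) * (T - t)) * A ≤ (c + δ) * ((1 + T) * T) * A := by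
    gcongr
  have hconst : -((T - t) * F 0 + FT 0) ≤ (|F 0| + |FT 0|) * (1 + N) * (1 + T) := calc
    -((T - t) * F 0 + FT 0) ≤ (T - t) * |F 0| + |FT 0| := by
      nlinarith [mul_le_mul_of_nonneg_left (neg_abs_le (F 0)) (sub_nonneg.2 htT), neg_abs_le (FT 0)]
    _ ≤ (|F 0| + |FT 0|) * 1 * (1 + T) := by nlinarith [abs_nonneg (F 0), abs_nonneg (FT 0)]
    _ ≤ (|F 0| + |FT 0|) * (1 + N) * (1 + T) := by gcongr <;> linarith
  have hgrowth : (T - t + 1) * (e + k * N) ≤ (e + k) * (1 + N) * (1 + T) := by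
    nlinarith [mul_nonneg he hN, mul_nonneg hk hN]
  have hkN : k * N = c * (1 + ε) / 2 * ((1 + 1 / ε) * N) := by ring
  nlinarith

theorem statement2_general
    (F FT : H → ℝ) (DF DFT : H → H) (c T lam : ℝ)
    (hF : ∀ X, HasGradientAt F (DF X) X) (hFT : ∀ X, HasGradientAt FT (DFT X) X)
    (hDF : ∀ X₁ X₂ : H, ‖DF X₁ - DF X₂‖ ≤ c * ‖X₁ - X₂‖)
    (hDFT : ∀ X₁ X₂ : H, ‖DFT X₁ - DFT X₂‖ ≤ c * ‖X₁ - X₂‖)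
    (hDF0 : ‖DF 0‖ ≤ c) (hDFT0 : ‖DFT 0‖ ≤ c)
    :
    (∀ δ > (0 : ℝ), ∃ C : ℝ, ∀ X : H, ∀ t ∈ Icc 0 T, ∀ v : ℝ → H, Admissible t T v →
      (lam - (c + δ) * T * (1 + T)) / 2 * (∫ s in t..T, ‖v s‖ ^ 2) -
          C * (1 + ‖X‖ ^ 2) * (1 + T) ≤ cost F FT lam X t T v) ∧
    (c * T * (1 + T) < lam → ∀ X : H, ∀ t ∈ Icc 0 T, ∀ M : ℝ, ∃ R : ℝ, ∀ v : ℝ → H,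
      Admissible t T v → R ≤ (∫ s in t..T, ‖v s‖ ^ 2) → M ≤ cost F FT lam X t T v) := by
  refine ⟨fun δ hδ => cost_coercive hF hFT hDF hDFT hDF0 hDFT0 hδ, ?_⟩
  intro hlam X t ht M
  set P := T * (1 + T)
  have hT : 0 ≤ T := ht.1.trans ht.2
  have hP : 0 ≤ P := by positivity
  set δ := (lam - c * P) / (2 * (P + 1))
  have hδ : 0 < δ := div_pos (by linarith) (by linarith)
  have hδP : δ * P < lam - c * P := by
    have hδmul : δ * (2 * (P + 1)) = lam - c * P := div_mul_cancel₀ _ (by linarith)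
    nlinarith
  obtain ⟨C, hC⟩ := cost_coercive (lam := lam) hF hFT hDF hDFT hDF0 hDFT0 hδ
  set μ := (lam - (c + δ) * T * (1 + T)) / 2
  have hμ : 0 < μ := by simp only [μ, mul_assoc]; linarith
  refine ⟨(M + C * (1 + ‖X‖ ^ 2) * (1 + T)) / μ, fun v hv hR => ?_⟩
  rw [div_le_iff₀ hμ] at hR
  linarith [hC X t ht v hv]

/-- coercivity lower bound for the cost functional; consequently, if
`λ > cT(1+T)`, the cost tends to `+∞` as the `L²` norm of the control tends to `+∞`. -/
theorem statement2
    (F FT : H → ℝ) (DF DFT : H → H) (c T lam : ℝ)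
    (hF : ∀ X, HasGradientAt F (DF X) X) (hFT : ∀ X, HasGradientAt FT (DFT X) X)
    (hDF : ∀ X₁ X₂ : H, ‖DF X₁ - DF X₂‖ ≤ c * ‖X₁ - X₂‖)
    (hDFT : ∀ X₁ X₂ : H, ‖DFT X₁ - DFT X₂‖ ≤ c * ‖X₁ - X₂‖)
    (hDF0 : ‖DF 0‖ ≤ c) (hDFT0 : ‖DFT 0‖ ≤ c)
    (hT : 0 < T) (hlam : 0 < lam)
    :
    (∀ δ > (0 : ℝ), ∃ C : ℝ, ∀ X : H, ∀ t ∈ Icc 0 T, ∀ v : ℝ → H, Admissible t T v →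
      (lam - (c + δ) * T * (1 + T)) / 2 * (∫ s in t..T, ‖v s‖ ^ 2) -
          C * (1 + ‖X‖ ^ 2) * (1 + T) ≤ cost F FT lam X t T v) ∧
    (c * T * (1 + T) < lam → ∀ X : H, ∀ t ∈ Icc 0 T, ∀ M : ℝ, ∃ R : ℝ, ∀ v : ℝ → H,
      Admissible t T v → R ≤ (∫ s in t..T, ‖v s‖ ^ 2) → M ≤ cost F FT lam X t T v) :=
  statement2_general F FT DF DFT c T lam hF hFT hDF hDFT hDF0 hDFT0
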